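/- arXiv:2508.04476 — 7 statements merged into one kernel-verified Lean document; each statement's English description precedes it below -/
import Mathlib

section
/- Let H be a real Hilbert space with a Hilbert basis (b i)_{i∈ι}, let T : H → H be a positive continuous linear operator (self-adjoint with ⟪T x, x⟫ ≥ 0 for all x) such that the family i ↦ ⟪T(b i), b i⟫ is summable, and let P : H → H be the orthogonal projection onto a closed subspace K of H. Then ∑' i, ⟪(P ∘ T ∘ P)(b i), b i⟫ ≤ ∑' i, ⟪T(b i), b i⟫. (For a positive operator the trace equals the Schatten-1 norm, so this is the Schatten-1 case of the inequality ‖P† T P‖_{S₁} ≤ ‖T‖_{S₁}.) -/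
open scoped InnerProductSpace

/-- Key lemma: for a positive symmetric operator `T` whose diagonal is summable in a Hilbert
basis `b`, the sum of `⟪T (E m), E m⟫` over any finite orthonormal family `E` is at most the
trace of `T` computed in the basis `b`. -/
lemma key_ineq {ι H : Type*} [NormedAddCommGroup H] [InnerProductSpace ℝ H] [CompleteSpace H]
    (b : HilbertBasis ι ℝ H) (T : H →L[ℝ] H)
    (hsym : ∀ x y : H, ⟪T x, y⟫_ℝ = ⟪x, T y⟫_ℝ)
    (hTpos : ∀ x : H, 0 ≤ ⟪T x, x⟫_ℝ)
    (hT : Summable fun i => ⟪T (b i), b i⟫_ℝ)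
    {n : ℕ} (E : Fin n → H) (hE : Orthonormal ℝ E) :
    ∑ m, ⟪T (E m), E m⟫_ℝ ≤ ∑' i, ⟪T (b i), b i⟫_ℝ := by
  classical
  set L := ∑ m, ⟪T (E m), E m⟫_ℝ with hLdef
  set u : ι → H := fun j => ∑ m, ⟪b j, E m⟫_ℝ • E m with hu
  have hON := orthonormal_iff_ite.mp hE
  -- first partial trace identity
  have h1 : HasSum (fun j => ⟪T (u j), b j⟫_ℝ) L := by
    have heq : (fun j => ⟪T (u j), b j⟫_ℝ)
        = fun j => ∑ m, ⟪b j, E m⟫_ℝ * ⟪T (E m), b j⟫_ℝ := by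
      funext j
      simp [u, map_sum, map_smul, sum_inner, real_inner_smul_left]
    rw [heq, hLdef]
    refine hasSum_sum fun m _ => ?_
    have h := b.hasSum_inner_mul_inner (T (E m)) (E m)
    have heq2 : (fun j => ⟪b j, E m⟫_ℝ * ⟪T (E m), b j⟫_ℝ)
        = fun j => ⟪T (E m), b j⟫_ℝ * ⟪b j, E m⟫_ℝ := by
      funext j; ring
    rw [heq2]; exact h
  -- second partial trace identity
  have h2 : HasSum (fun j => ⟪T (u j), u j⟫_ℝ) L := by
    have heq : (fun j => ⟪T (u j), u j⟫_ℝ)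
        = fun j => ∑ m, ∑ m', (⟪b j, E m'⟫_ℝ * ⟪b j, E m⟫_ℝ) * ⟪T (E m), E m'⟫_ℝ := by
      funext j
      have hTu : T (u j) = ∑ m, ⟪b j, E m⟫_ℝ • T (E m) := by
        simp [u, map_sum, map_smul]
      rw [hTu, sum_inner]
      refine Finset.sum_congr rfl fun m _ => ?_
      rw [real_inner_smul_left, hu]
      simp only [inner_sum, real_inner_smul_right, Finset.mul_sum]
      refine Finset.sum_congr rfl fun m' _ => ?_
      ring
    have hval : L = ∑ m, ∑ m', ⟪E m', E m⟫_ℝ * ⟪T (E m), E m'⟫_ℝ := by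
      rw [hLdef]
      refine Finset.sum_congr rfl fun m _ => ?_
      rw [Finset.sum_eq_single m (fun m' _ hne => by rw [hON m' m, if_neg hne, zero_mul])
        (fun h => absurd (Finset.mem_univ m) h)]
      rw [hON m m, if_pos rfl, one_mul]
    rw [heq, hval]
    refine hasSum_sum fun m _ => hasSum_sum fun m' _ => ?_
    have h := (b.hasSum_inner_mul_inner (E m') (E m)).mul_right ⟪T (E m), E m'⟫_ℝ
    have heq2 : (fun j => (⟪b j, E m'⟫_ℝ * ⟪b j, E m⟫_ℝ) * ⟪T (E m), E m'⟫_ℝ)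
        = fun j => (⟪E m', b j⟫_ℝ * ⟪b j, E m⟫_ℝ) * ⟪T (E m), E m'⟫_ℝ := by
      funext j; rw [real_inner_comm (b j) (E m')]
    rw [heq2]; exact h
  -- pointwise AM-GM type inequality from positivity
  have h3 : ∀ j, 2 * ⟪T (u j), b j⟫_ℝ ≤ ⟪T (u j), u j⟫_ℝ + ⟪T (b j), b j⟫_ℝ := by
    intro j
    have h0 := hTpos (u j - b j)
    have e2 : ⟪T (b j), u j⟫_ℝ = ⟪T (u j), b j⟫_ℝ := by
      rw [hsym, real_inner_comm]
    have e1 : ⟪T (u j - b j), u j - b j⟫_ℝ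
        = ⟪T (u j), u j⟫_ℝ - 2 * ⟪T (u j), b j⟫_ℝ + ⟪T (b j), b j⟫_ℝ := by
      rw [map_sub, inner_sub_left, inner_sub_right, inner_sub_right, e2]
      ring
    rw [e1] at h0
    linarith
  -- conclude
  have hts := Summable.tsum_le_tsum h3 (h1.mul_left 2).summable (h2.summable.add hT)
  rw [(h1.mul_left 2).tsum_eq, (h2.add hT.hasSum).tsum_eq] at hts
  linarith

/-- Schatten-1 (trace) case of `‖P† T P‖_{S₁} ≤ ‖T‖_{S₁}` for a positive operator `T` and the
orthogonal projection `P` onto a closed subspace `K`. -/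
theorem stmt_1 {ι H : Type*} [NormedAddCommGroup H] [InnerProductSpace ℝ H] [CompleteSpace H]
    (b : HilbertBasis ι ℝ H) (T : H →L[ℝ] H)
    (hTsa : ContinuousLinearMap.adjoint T = T)
    (hTpos : ∀ x : H, 0 ≤ ⟪T x, x⟫_ℝ)
    (hT : Summable fun i => ⟪T (b i), b i⟫_ℝ)
    (K : Submodule ℝ H) (hKc : IsClosed (K : Set H))
    (P : H →L[ℝ] H) (hPK : ∀ x ∈ K, P x = x) (hPperp : ∀ x ∈ Kᗮ, P x = 0) :
    ∑' i, ⟪(P.comp (T.comp P)) (b i), b i⟫_ℝ ≤ ∑' i, ⟪T (b i), b i⟫_ℝ := by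
  classical
  haveI : CompleteSpace K := hKc.completeSpace_coe
  have hsym : ∀ x y : H, ⟪T x, y⟫_ℝ = ⟪x, T y⟫_ℝ := by
    intro x y
    conv_lhs => rw [← hTsa]
    exact ContinuousLinearMap.adjoint_inner_left T y x
  -- identify P with the orthogonal projection
  have hPx : ∀ x : H, P x = (Submodule.orthogonalProjection K x : H) := by
    intro x
    have hx : P x = P ((Submodule.orthogonalProjection K x : H) + (x - (Submodule.orthogonalProjection K x : H))) := by
      congr 1
      abel
    rw [map_add, hPK _ (Submodule.orthogonalProjection K x).2,
      hPperp (x - (Submodule.orthogonalProjection K x : H)) (Submodule.sub_starProjection_mem_orthogonal (K := K) x), add_zero] at hx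
    exact hx
  have hPsym : ∀ x y : H, ⟪P x, y⟫_ℝ = ⟪x, P y⟫_ℝ := by
    intro x y
    rw [hPx, hPx]
    exact Submodule.inner_starProjection_left_eq_right K x y
  have hPnorm : ∀ x : H, ‖P x‖ ≤ ‖x‖ := by
    intro x
    rw [hPx]
    calc ‖(Submodule.orthogonalProjection K x : H)‖ = ‖Submodule.orthogonalProjection K x‖ := rfl
      _ ≤ ‖Submodule.orthogonalProjection K‖ * ‖x‖ := (Submodule.orthogonalProjection K).le_opNorm x
      _ ≤ 1 * ‖x‖ :=
        mul_le_mul_of_nonneg_right (Submodule.orthogonalProjectionOnto_norm_le K) (norm_nonneg x)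
      _ = ‖x‖ := one_mul _
  -- rewrite the left-hand side
  have hg : ∀ i, ⟪(P.comp (T.comp P)) (b i), b i⟫_ℝ = ⟪T (P (b i)), P (b i)⟫_ℝ := by
    intro i
    simp only [ContinuousLinearMap.comp_apply]
    exact hPsym (T (P (b i))) (b i)
  rw [tsum_congr hg]
  -- the key finite bound
  have hbound : ∀ F : Finset ι,
      ∑ i ∈ F, ⟪T (P (b i)), P (b i)⟫_ℝ ≤ ∑' i, ⟪T (b i), b i⟫_ℝ := by
    intro F
    set V : Submodule ℝ H := Submodule.span ℝ (↑(F.image fun i => P (b i)) : Set H) with hVdef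
    haveI : FiniteDimensional ℝ V := FiniteDimensional.span_finset ℝ _
    haveI : CompleteSpace V := FiniteDimensional.complete ℝ V
    -- the compression of T to V
    set S : V →ₗ[ℝ] V :=
      (Submodule.orthogonalProjection V).toLinearMap ∘ₗ (T.toLinearMap.domRestrict V) with hSdef
    have hbridge : ∀ v w : V, ⟪((S v : V) : H), (w : H)⟫_ℝ = ⟪T (v : H), (w : H)⟫_ℝ := by
      intro v w
      have h0 : ⟪((S v : V) : H), (w : H)⟫_ℝ
          = ⟪((Submodule.orthogonalProjection V (T (v : H))) : H), (w : H)⟫_ℝ := rfl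
      rw [h0]
      exact Submodule.inner_orthogonalProjectionOnto_eq_of_mem_right w _
    have hSsym : S.IsSymmetric := by
      intro v w
      show ⟪((S v : V) : H), (w : H)⟫_ℝ = ⟪(v : H), ((S w : V) : H)⟫_ℝ
      calc ⟪((S v : V) : H), (w : H)⟫_ℝ = ⟪T (v : H), (w : H)⟫_ℝ := hbridge v w
        _ = ⟪(v : H), T (w : H)⟫_ℝ := hsym _ _
        _ = ⟪T (w : H), (v : H)⟫_ℝ := real_inner_comm _ _
        _ = ⟪((S w : V) : H), (v : H)⟫_ℝ := (hbridge w v).symm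
        _ = ⟪(v : H), ((S w : V) : H)⟫_ℝ := real_inner_comm _ _
    set n := Module.finrank ℝ V with hn
    set e : OrthonormalBasis (Fin n) ℝ V := hSsym.eigenvectorBasis rfl with he
    set E : Fin n → H := fun m => ((e m : V) : H) with hE
    have hEON : Orthonormal ℝ E := by
      rw [orthonormal_iff_ite]
      intro m m'
      have : ⟪E m, E m'⟫_ℝ = ⟪e m, e m'⟫_ℝ := rfl
      rw [this]
      exact orthonormal_iff_ite.mp e.orthonormal m m'
    -- off-diagonal vanishing
    have hoff : ∀ m m' : Fin n, m ≠ m' → ⟪T (E m), E m'⟫_ℝ = 0 := by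
      intro m m' hne
      have h0 : ⟪T (E m), E m'⟫_ℝ = ⟪S (e m), e m'⟫_ℝ := (hbridge (e m) (e m')).symm
      rw [h0, hSsym.apply_eigenvectorBasis rfl m]
      have := orthonormal_iff_ite.mp e.orthonormal m m'
      rw [real_inner_smul_left, this, if_neg hne, mul_zero]
    -- expansion of the quadratic form on V
    have hexp : ∀ x : H, x ∈ V →
        ⟪T x, x⟫_ℝ = ∑ m, ⟪E m, x⟫_ℝ ^ 2 * ⟪T (E m), E m⟫_ℝ := by
      intro x hx
      set v : V := ⟨x, hx⟩ with hv
      have hrepr : x = ∑ m, ⟪E m, x⟫_ℝ • E m := by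
        have h0 := e.sum_repr v
        have h1' : ∑ m, e.repr v m • E m = x := by
          have h1 := congrArg (fun z : V => (z : H)) h0
          simpa using h1
        have h2 : ∀ m, e.repr v m = ⟪E m, x⟫_ℝ := by
          intro m
          rw [e.repr_apply_apply v m]
          rfl
        refine h1'.symm.trans ?_
        exact Finset.sum_congr rfl fun m _ => by rw [h2 m]
      calc ⟪T x, x⟫_ℝ
          = ⟪T (∑ m, ⟪E m, x⟫_ℝ • E m), ∑ m', ⟪E m', x⟫_ℝ • E m'⟫_ℝ := by rw [← hrepr]
        _ = ∑ m, ∑ m', ⟪E m, x⟫_ℝ * (⟪E m', x⟫_ℝ * ⟪T (E m), E m'⟫_ℝ) := by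
            rw [map_sum, sum_inner]
            refine Finset.sum_congr rfl fun m _ => ?_
            rw [ContinuousLinearMap.map_smul, real_inner_smul_left]
            simp only [inner_sum, real_inner_smul_right, Finset.mul_sum]
        _ = ∑ m, ⟪E m, x⟫_ℝ ^ 2 * ⟪T (E m), E m⟫_ℝ := by
            refine Finset.sum_congr rfl fun m _ => ?_
            rw [Finset.sum_eq_single m
              (fun m' _ hne => by rw [hoff m m' (Ne.symm hne), mul_zero, mul_zero])
              (fun h => absurd (Finset.mem_univ m) h)]
            ring
    -- membership of the P (b i) in V
    have hmem : ∀ i ∈ F, P (b i) ∈ V := by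
      intro i hi
      apply Submodule.subset_span
      exact Finset.mem_coe.mpr (Finset.mem_image_of_mem _ hi)
    -- the frame bound
    have hframe : ∀ m : Fin n, ∑ i ∈ F, ⟪E m, P (b i)⟫_ℝ ^ 2 ≤ 1 := by
      intro m
      have hre : ∀ i, ⟪E m, P (b i)⟫_ℝ = ⟪b i, P (E m)⟫_ℝ := by
        intro i
        rw [real_inner_comm, hPsym]
      have hbessel := b.orthonormal.sum_inner_products_le (x := P (E m)) (s := F)
      have hnorm : ∀ i, ‖⟪b i, P (E m)⟫_ℝ‖ ^ 2 = ⟪b i, P (E m)⟫_ℝ ^ 2 := by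
        intro i; rw [Real.norm_eq_abs, sq_abs]
      calc ∑ i ∈ F, ⟪E m, P (b i)⟫_ℝ ^ 2
          = ∑ i ∈ F, ‖⟪b i, P (E m)⟫_ℝ‖ ^ 2 := by
            refine Finset.sum_congr rfl fun i _ => ?_
            rw [hre i, hnorm i]
        _ ≤ ‖P (E m)‖ ^ 2 := hbessel
        _ ≤ ‖E m‖ ^ 2 := by
            have := hPnorm (E m)
            exact pow_le_pow_left₀ (norm_nonneg _) this 2
        _ = 1 := by rw [hEON.1 m]; norm_num
    calc ∑ i ∈ F, ⟪T (P (b i)), P (b i)⟫_ℝ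
        = ∑ i ∈ F, ∑ m, ⟪E m, P (b i)⟫_ℝ ^ 2 * ⟪T (E m), E m⟫_ℝ := by
          refine Finset.sum_congr rfl fun i hi => ?_
          exact hexp _ (hmem i hi)
      _ = ∑ m, (∑ i ∈ F, ⟪E m, P (b i)⟫_ℝ ^ 2) * ⟪T (E m), E m⟫_ℝ := by
          rw [Finset.sum_comm]
          refine Finset.sum_congr rfl fun m _ => ?_
          rw [Finset.sum_mul]
      _ ≤ ∑ m, ⟪T (E m), E m⟫_ℝ := by
          refine Finset.sum_le_sum fun m _ => ?_
          exact mul_le_of_le_one_left (hTpos (E m)) (hframe m)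
      _ ≤ ∑' i, ⟪T (b i), b i⟫_ℝ := key_ineq b T hsym hTpos hT E hEON
  have hs : Summable fun i => ⟪T (P (b i)), P (b i)⟫_ℝ :=
    summable_of_sum_le (fun i => hTpos (P (b i))) hbound
  exact Summable.tsum_le_of_sum_le hs hbound
end

section
/- Let M be a real positive semidefinite n × n matrix, let P be a real n × n matrix that is symmetric and idempotent (Pᵀ = P and P * P = P), and let p ≥ 1 be a real number. Then the matrix P * M * P is positive semidefinite, and the sum over i of the i-th eigenvalue of P * M * P raised to the power p is at most the sum over i of the i-th eigenvalue of M raised to the power p (eigenvalues listed with multiplicity via the spectral theorem for real symmetric matrices; all eigenvalues are nonnegative, and powers are real powers). Equivalently, ‖P M P‖_{S_p} ≤ ‖M‖_{S_p} for every Schatten p-norm with p ≥ 1. -/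
open Matrix

section aux

variable {n : ℕ}

/-- Jensen for `x ^ p` with subprobability weights. -/
private lemma jensen_aux (p : ℝ) (hp : 1 ≤ p) (w l : Fin n → ℝ)
    (hw : ∀ k, 0 ≤ w k) (hl : ∀ k, 0 ≤ l k) (hs : ∑ k, w k ≤ 1) :
    (∑ k, w k * l k) ^ p ≤ ∑ k, w k * l k ^ p := by
  have hconv : ConvexOn ℝ (Set.Ici 0) fun x : ℝ => x ^ p := convexOn_rpow hp
  set w' : Option (Fin n) → ℝ := fun o => o.elim (1 - ∑ k, w k) w with hw'
  set z : Option (Fin n) → ℝ := fun o => o.elim 0 l with hz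
  have h₀ : ∀ i ∈ (Finset.univ : Finset (Option (Fin n))), 0 ≤ w' i := by
    rintro (_ | k) _
    · simpa [hw'] using hs
    · exact hw k
  have h₁ : ∑ i : Option (Fin n), w' i = 1 := by
    rw [Fintype.sum_option]; simp [hw']
  have hmem : ∀ i ∈ (Finset.univ : Finset (Option (Fin n))), z i ∈ Set.Ici (0 : ℝ) := by
    rintro (_ | k) _
    · simp [hz]
    · exact hl k
  have h := hconv.map_sum_le h₀ h₁ hmem
  rw [Fintype.sum_option, Fintype.sum_option] at h
  have hp0 : p ≠ 0 := by linarith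
  simpa [hw', hz, smul_eq_mul, Real.zero_rpow hp0] using h

variable {A : Matrix (Fin n) (Fin n) ℝ}

/-- Parseval for the eigenvector basis, in dot-product form. -/
private lemma parseval_aux (hA : A.IsHermitian) (v : Fin n → ℝ) :
    ∑ k, (⇑(hA.eigenvectorBasis k) ⬝ᵥ v) ^ 2 = v ⬝ᵥ v := by
  set V : Matrix (Fin n) (Fin n) ℝ := (hA.eigenvectorUnitary : Matrix (Fin n) (Fin n) ℝ)
  have hcol : ∀ k, (star V *ᵥ v) k = ⇑(hA.eigenvectorBasis k) ⬝ᵥ v := by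
    intro k
    simp only [mulVec, dotProduct, star_apply, star_trivial]
    refine Finset.sum_congr rfl fun i _ => ?_
    rw [show V i k = ⇑(hA.eigenvectorBasis k) i from rfl, mul_comm]
  have hVV : V * star V = 1 := (Matrix.mem_unitaryGroup_iff).mp hA.eigenvectorUnitary.2
  have hstar : star V = Vᵀ := by ext i j; simp [star_apply]
  calc ∑ k, (⇑(hA.eigenvectorBasis k) ⬝ᵥ v) ^ 2
      = (star V *ᵥ v) ⬝ᵥ (star V *ᵥ v) := by
        simp [dotProduct, hcol, pow_two]
    _ = v ⬝ᵥ v := by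
        rw [hstar, dotProduct_mulVec, vecMul_transpose, mulVec_mulVec, dotProduct_comm]
        rw [show V * Vᵀ = 1 by rw [← hstar]; exact hVV, one_mulVec]

/-- Quadratic form in terms of eigenvalues. -/
private lemma quadform_aux (hA : A.IsHermitian) (v : Fin n → ℝ) :
    v ⬝ᵥ (A *ᵥ v) = ∑ k, hA.eigenvalues k * (⇑(hA.eigenvectorBasis k) ⬝ᵥ v) ^ 2 := by
  set V : Matrix (Fin n) (Fin n) ℝ := (hA.eigenvectorUnitary : Matrix (Fin n) (Fin n) ℝ)
  have hstar : star V = Vᵀ := by ext i j; simp [star_apply]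
  have hcol : ∀ k, (star V *ᵥ v) k = ⇑(hA.eigenvectorBasis k) ⬝ᵥ v := by
    intro k
    simp only [mulVec, dotProduct, star_apply, star_trivial]
    refine Finset.sum_congr rfl fun i _ => ?_
    rw [show V i k = ⇑(hA.eigenvectorBasis k) i from rfl, mul_comm]
  calc v ⬝ᵥ (A *ᵥ v)
      = v ⬝ᵥ ((V * (Matrix.diagonal hA.eigenvalues * star V)) *ᵥ v) := by
        conv_lhs => rw [hA.spectral_theorem]
        rw [Unitary.conjStarAlgAut_apply, Matrix.mul_assoc]
        norm_num [Function.comp]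
        rfl
    _ = (star V *ᵥ v) ⬝ᵥ (Matrix.diagonal hA.eigenvalues *ᵥ (star V *ᵥ v)) := by
        rw [hstar, ← mulVec_mulVec, dotProduct_mulVec (v := v), ← Matrix.mulVec_transpose,
          ← mulVec_mulVec]
    _ = ∑ k, hA.eigenvalues k * (⇑(hA.eigenvectorBasis k) ⬝ᵥ v) ^ 2 := by
        simp only [dotProduct, mulVec_diagonal, hcol]
        refine Finset.sum_congr rfl fun k _ => ?_
        ring

/-- The eigenvector basis elements have unit dot product with themselves. -/
private lemma basis_norm_aux (hA : A.IsHermitian) (k : Fin n) :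
    ⇑(hA.eigenvectorBasis k) ⬝ᵥ ⇑(hA.eigenvectorBasis k) = 1 := by
  have h := orthonormal_iff_ite.mp hA.eigenvectorBasis.orthonormal k k
  rw [if_pos rfl] at h
  rw [← h]
  simp only [PiLp.inner_apply, dotProduct, RCLike.inner_apply, conj_trivial, mul_comm]

end aux

/-- For a real psd matrix `M`, a symmetric idempotent `P`, and `p ≥ 1`: `P * M * P` is psd and
`∑ i, λ_i(P M P)^p ≤ ∑ i, λ_i(M)^p`, i.e. `‖P M P‖_{S_p} ≤ ‖M‖_{S_p}`. -/
theorem stmt_2 {n : ℕ} (M P : Matrix (Fin n) (Fin n) ℝ)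
    (hM : M.PosSemidef) (hPsym : Pᵀ = P) (hPidem : P * P = P)
    (p : ℝ) (hp : 1 ≤ p) :
    ∃ hPMP : (P * M * P).PosSemidef,
      ∑ i, hPMP.1.eigenvalues i ^ p ≤ ∑ i, hM.1.eigenvalues i ^ p := by
  have hPMP : (P * M * P).PosSemidef := by
    have h := hM.mul_mul_conjTranspose_same P
    have : Pᴴ = P := by
      rw [Matrix.conjTranspose]; ext i j; simpa using congrFun (congrFun hPsym i) j
    rwa [this] at h
  refine ⟨hPMP, ?_⟩
  set E : Fin n → (Fin n → ℝ) := fun k => ⇑(hM.1.eigenvectorBasis k) with hE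
  set U : Fin n → (Fin n → ℝ) := fun j => ⇑(hPMP.1.eigenvectorBasis j) with hU
  set lam : Fin n → ℝ := hM.1.eigenvalues with hlam
  set mu : Fin n → ℝ := hPMP.1.eigenvalues with hmu'
  have hPdot : ∀ x y : Fin n → ℝ, x ⬝ᵥ (P *ᵥ y) = (P *ᵥ x) ⬝ᵥ y := by
    intro x y
    rw [dotProduct_mulVec]
    nth_rewrite 1 [← hPsym]
    rw [vecMul_transpose]
  have hcontr : ∀ x : Fin n → ℝ, (P *ᵥ x) ⬝ᵥ (P *ᵥ x) ≤ x ⬝ᵥ x := by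
    intro x
    have h1 : (P *ᵥ x) ⬝ᵥ (P *ᵥ x) = x ⬝ᵥ (P *ᵥ x) := by
      rw [← hPdot, mulVec_mulVec, hPidem]
    have h2 : 0 ≤ ((x - P *ᵥ x) ⬝ᵥ (x - P *ᵥ x)) :=
      Finset.sum_nonneg fun i _ => mul_self_nonneg _
    have h3 : (x - P *ᵥ x) ⬝ᵥ (x - P *ᵥ x) = x ⬝ᵥ x - x ⬝ᵥ (P *ᵥ x) := by
      rw [sub_dotProduct, dotProduct_sub, dotProduct_sub, dotProduct_comm (P *ᵥ x) x, h1]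
      ring
    linarith
  set c : Fin n → Fin n → ℝ := fun j k => E k ⬝ᵥ (P *ᵥ U j) with hc
  -- each eigenvalue of PMP is a subconvex combination of eigenvalues of M
  have hmu : ∀ j, mu j = ∑ k, (c j k) ^ 2 * lam k := by
    intro j
    have h1 : (P * M * P) *ᵥ U j = mu j • U j := hPMP.1.mulVec_eigenvectorBasis j
    have h2 : U j ⬝ᵥ ((P * M * P) *ᵥ U j) = mu j := by
      rw [h1, dotProduct_smul, smul_eq_mul, basis_norm_aux hPMP.1 j, mul_one]
    have h3 : U j ⬝ᵥ ((P * M * P) *ᵥ U j) = (P *ᵥ U j) ⬝ᵥ (M *ᵥ (P *ᵥ U j)) := by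
      rw [← mulVec_mulVec, ← mulVec_mulVec, hPdot, dotProduct_mulVec, dotProduct_mulVec]
    rw [← h2, h3, quadform_aux hM.1]
    exact Finset.sum_congr rfl fun k _ => by rw [mul_comm]
  have hlam0 : ∀ k, 0 ≤ lam k := fun k => hM.eigenvalues_nonneg k
  have hrow : ∀ j, ∑ k, (c j k) ^ 2 ≤ 1 := by
    intro j
    calc ∑ k, (c j k) ^ 2 = (P *ᵥ U j) ⬝ᵥ (P *ᵥ U j) := parseval_aux hM.1 _
      _ ≤ U j ⬝ᵥ U j := hcontr _
      _ = 1 := basis_norm_aux hPMP.1 j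
  have hcolsum : ∀ k, ∑ j, (c j k) ^ 2 ≤ 1 := by
    intro k
    have hck : ∀ j, c j k = U j ⬝ᵥ (P *ᵥ E k) := by
      intro j
      rw [hc]
      rw [hPdot, dotProduct_comm]
    calc ∑ j, (c j k) ^ 2 = ∑ j, (U j ⬝ᵥ (P *ᵥ E k)) ^ 2 := by
          exact Finset.sum_congr rfl fun j _ => by rw [hck]
      _ = (P *ᵥ E k) ⬝ᵥ (P *ᵥ E k) := parseval_aux hPMP.1 _
      _ ≤ E k ⬝ᵥ E k := hcontr _
      _ = 1 := basis_norm_aux hM.1 k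
  -- put it together
  calc ∑ j, mu j ^ p
      = ∑ j, (∑ k, (c j k) ^ 2 * lam k) ^ p := by
        exact Finset.sum_congr rfl fun j _ => by rw [hmu]
    _ ≤ ∑ j, ∑ k, (c j k) ^ 2 * lam k ^ p := by
        refine Finset.sum_le_sum fun j _ => ?_
        exact jensen_aux p hp _ lam (fun k => sq_nonneg _) hlam0 (hrow j)
    _ = ∑ k, (∑ j, (c j k) ^ 2) * lam k ^ p := by
        rw [Finset.sum_comm]
        exact Finset.sum_congr rfl fun k _ => by rw [Finset.sum_mul]
    _ ≤ ∑ k, lam k ^ p := by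
        refine Finset.sum_le_sum fun k _ => ?_
        have := Real.rpow_nonneg (hlam0 k) p
        nlinarith [hcolsum k, Finset.sum_nonneg (fun j (_ : j ∈ Finset.univ) => sq_nonneg (c j k))]
end

section
/- Let H be a real Hilbert space with a Hilbert basis (b i)_{i∈ι}, let L : H → H be a continuous linear operator, and let B, λ_F ≥ 0. Assume the family i ↦ ‖(L† ∘ L)(b i)‖² is summable with ∑' i, ‖(L† ∘ L)(b i)‖² ≤ λ_F² (i.e., ‖L† L‖_{S₂} ≤ λ_F). Then for all x_h, x_i, x_j ∈ H with ‖x_h‖ ≤ B, ‖x_i‖ ≤ B, and ‖x_j‖ ≤ B, one has ‖L x_h − L x_i‖² − ‖L x_h − L x_j‖² ≤ 6 B² λ_F. -/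
open scoped InnerProductSpace

/- Parseval's identity bounds the operator norm of `T` by the Hilbert–Schmidt norm of `T†`
(`‖T x‖² = ∑ |⟪T† bᵢ, x⟫|² ≤ ‖x‖² ∑ ‖T† bᵢ‖²`); for the self-adjoint `T = L† L` this gives
`‖L‖² = ‖L† L‖ ≤ λ_F`, so `‖L xₕ - L xᵢ‖² ≤ λ_F ‖xₕ - xᵢ‖² ≤ 4 B² λ_F`, and the subtracted
square is nonnegative. -/

namespace HilbertBasis

variable {ι 𝕜 E : Type*} [RCLike 𝕜] [NormedAddCommGroup E] [InnerProductSpace 𝕜 E]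

theorem hasSum_norm_inner_sq (b : HilbertBasis ι 𝕜 E) (x : E) :
    HasSum (fun i => ‖⟪b i, x⟫_𝕜‖ ^ 2) (‖x‖ ^ 2) := by
  have parseval := lp.hasSum_norm (p := 2) (by norm_num) (b.repr x)
  simpa only [ENNReal.toReal_ofNat, Real.rpow_two, LinearIsometryEquiv.norm_map,
    b.repr_apply_apply] using parseval

end HilbertBasis

namespace ContinuousLinearMap

variable {ι 𝕜 E F : Type*} [RCLike 𝕜] [NormedAddCommGroup E] [InnerProductSpace 𝕜 E]
  [CompleteSpace E] [NormedAddCommGroup F] [InnerProductSpace 𝕜 F] [CompleteSpace F]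

theorem norm_apply_sq_le_tsum_norm_adjoint_apply_sq (b : HilbertBasis ι 𝕜 F) (T : E →L[𝕜] F)
    (hT : Summable fun i => ‖adjoint T (b i)‖ ^ 2) (x : E) :
    ‖T x‖ ^ 2 ≤ (∑' i, ‖adjoint T (b i)‖ ^ 2) * ‖x‖ ^ 2 := by
  refine hasSum_le (fun i => ?_) (b.hasSum_norm_inner_sq (T x)) (hT.hasSum.mul_right _)
  rw [← adjoint_inner_left, ← mul_pow]
  gcongr
  exact norm_inner_le_norm _ _

theorem opNorm_le_sqrt_tsum_norm_adjoint_apply_sq (b : HilbertBasis ι 𝕜 F) (T : E →L[𝕜] F)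
    (hT : Summable fun i => ‖adjoint T (b i)‖ ^ 2) :
    ‖T‖ ≤ √(∑' i, ‖adjoint T (b i)‖ ^ 2) := by
  refine opNorm_le_bound _ (Real.sqrt_nonneg _) fun x => ?_
  rw [← pow_le_pow_iff_left₀ (norm_nonneg _) (by positivity) two_ne_zero, mul_pow,
    Real.sq_sqrt (tsum_nonneg fun _ => by positivity)]
  exact norm_apply_sq_le_tsum_norm_adjoint_apply_sq b T hT x

theorem norm_apply_sq_le_of_norm_adjoint_comp_self_le (L : E →L[𝕜] F) {c : ℝ}
    (hc : ‖adjoint L ∘L L‖ ≤ c) (x : E) : ‖L x‖ ^ 2 ≤ c * ‖x‖ ^ 2 := by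
  rw [norm_adjoint_comp_self, ← sq] at hc
  calc ‖L x‖ ^ 2 ≤ (‖L‖ * ‖x‖) ^ 2 := by gcongr; exact le_opNorm L x
    _ = ‖L‖ ^ 2 * ‖x‖ ^ 2 := mul_pow _ _ _
    _ ≤ c * ‖x‖ ^ 2 := by gcongr

end ContinuousLinearMap

open ContinuousLinearMap

theorem stmt_4_general {ι H : Type*} [NormedAddCommGroup H] [InnerProductSpace ℝ H] [CompleteSpace H]
    (b : HilbertBasis ι ℝ H) (L : H →L[ℝ] H) (B lF : ℝ) (hlF : 0 ≤ lF)
    (hsum : Summable fun i => ‖((ContinuousLinearMap.adjoint L).comp L) (b i)‖ ^ 2)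
    (hHS : ∑' i, ‖((ContinuousLinearMap.adjoint L).comp L) (b i)‖ ^ 2 ≤ lF ^ 2)
    (xh xi xj : H) (hxh : ‖xh‖ ≤ B) (hxi : ‖xi‖ ≤ B) :
    ‖L xh - L xi‖ ^ 2 - ‖L xh - L xj‖ ^ 2 ≤ 6 * B ^ 2 * lF := by
  have hselfAdjoint : adjoint (adjoint L ∘L L) = adjoint L ∘L L := by
    rw [adjoint_comp, adjoint_adjoint]
  have hnorm : ‖adjoint L ∘L L‖ ≤ lF := by
    have := opNorm_le_sqrt_tsum_norm_adjoint_apply_sq b (adjoint L ∘L L)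
      (by rwa [hselfAdjoint])
    rw [hselfAdjoint] at this
    exact this.trans ((Real.sqrt_le_sqrt hHS).trans_eq (Real.sqrt_sq hlF))
  have hdist : ‖xh - xi‖ ≤ 2 * B := (norm_sub_le xh xi).trans (by linarith)
  have hbound : ‖L xh - L xi‖ ^ 2 ≤ lF * (2 * B) ^ 2 := by
    rw [← map_sub]
    refine (norm_apply_sq_le_of_norm_adjoint_comp_self_le L hnorm _).trans ?_
    gcongr
  linarith [sq_nonneg ‖L xh - L xj‖, mul_nonneg hlF (sq_nonneg B)]

/-- If `‖L† L‖_{S₂} ≤ λ_F` then the difference of squared distances of a triplet of points of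
norm at most `B` is bounded by `6 B² λ_F`. -/
theorem stmt_4 {ι H : Type*} [NormedAddCommGroup H] [InnerProductSpace ℝ H] [CompleteSpace H]
    (b : HilbertBasis ι ℝ H) (L : H →L[ℝ] H) (B lF : ℝ) (hB : 0 ≤ B) (hlF : 0 ≤ lF)
    (hsum : Summable fun i => ‖((ContinuousLinearMap.adjoint L).comp L) (b i)‖ ^ 2)
    (hHS : ∑' i, ‖((ContinuousLinearMap.adjoint L).comp L) (b i)‖ ^ 2 ≤ lF ^ 2)
    (xh xi xj : H) (hxh : ‖xh‖ ≤ B) (hxi : ‖xi‖ ≤ B) (hxj : ‖xj‖ ≤ B) :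
    ‖L xh - L xi‖ ^ 2 - ‖L xh - L xj‖ ^ 2 ≤ 6 * B ^ 2 * lF :=
  stmt_4_general b L B lF hlF hsum hHS xh xi xj hxh hxi
end

section
/- Let H be a real Hilbert space with a Hilbert basis (b k)_{k∈ι}, L : H → H a continuous linear operator, ψ : Fin n → H an orthonormal family, K the (finite-dimensional, hence closed) span of {ψ 1, …, ψ n}, and P the orthogonal projection of H onto K. Define the n × n real matrix M by M i j = ⟪L(ψ i), L(ψ j)⟫. Then the family k ↦ ‖(P ∘ L† ∘ L ∘ P)(b k)‖² is summable and ∑' k, ‖(P ∘ L† ∘ L ∘ P)(b k)‖² = ∑_{i} ∑_{j} (M i j)². That is, the Hilbert–Schmidt norm of P† L† L P equals the Frobenius norm of M: ‖P† L† L P‖_{S₂} = ‖M‖_F. -/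
/-!
Write `T = P L† L P`. Since `P x = ∑ᵢ ⟪ψᵢ, x⟫ ψᵢ`, we get `T x = ∑ⱼ ⟪vⱼ, x⟫ ψⱼ` with
`vⱼ = ∑ᵢ Mⱼᵢ ψᵢ`, so `‖T x‖² = ∑ⱼ ⟪vⱼ, x⟫²` by orthonormality of `ψ`. Parseval's identity in the
Hilbert basis `b` then gives `∑ₖ ‖T bₖ‖² = ∑ⱼ ‖vⱼ‖² = ∑ⱼ ∑ᵢ Mⱼᵢ²`.
-/

open scoped InnerProductSpace

open Submodule

section Projection

variable {𝕜 E ι : Type*} [RCLike 𝕜] [NormedAddCommGroup E] [InnerProductSpace 𝕜 E] [Fintype ι]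
  {ψ : ι → E}

theorem Orthonormal.sub_sum_inner_smul_mem_orthogonal (hψ : Orthonormal 𝕜 ψ) (x : E) :
    x - ∑ i, ⟪ψ i, x⟫_𝕜 • ψ i ∈ (span 𝕜 (Set.range ψ))ᗮ := by
  rw [← Submodule.span_singleton_le_iff_mem, ← isOrtho_iff_le, isOrtho_span]
  rintro _ hw _ ⟨i, rfl⟩
  rw [Set.mem_singleton_iff.mp hw, inner_eq_zero_symm, inner_sub_right, hψ.inner_right_fintype,
    sub_self]

theorem Orthonormal.apply_eq_sum_inner_smul (hψ : Orthonormal 𝕜 ψ) {P : E →L[𝕜] E}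
    (hPK : ∀ x ∈ span 𝕜 (Set.range ψ), P x = x) (hPperp : ∀ x ∈ (span 𝕜 (Set.range ψ))ᗮ, P x = 0)
    (x : E) : P x = ∑ i, ⟪ψ i, x⟫_𝕜 • ψ i := by
  have hmem : ∑ i, ⟪ψ i, x⟫_𝕜 • ψ i ∈ span 𝕜 (Set.range ψ) :=
    sum_mem fun i _ => smul_mem _ _ (subset_span ⟨i, rfl⟩)
  calc P x = P (∑ i, ⟪ψ i, x⟫_𝕜 • ψ i + (x - ∑ i, ⟪ψ i, x⟫_𝕜 • ψ i)) := by
        rw [add_sub_cancel]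
    _ = ∑ i, ⟪ψ i, x⟫_𝕜 • ψ i := by
        rw [map_add, hPK _ hmem, hPperp _ (hψ.sub_sum_inner_smul_mem_orthogonal x), add_zero]

end Projection

section Real

variable {E ι : Type*} [NormedAddCommGroup E] [InnerProductSpace ℝ E]

theorem Orthonormal.norm_sum_smul_sq [Fintype ι] {ψ : ι → E} (hψ : Orthonormal ℝ ψ) (c : ι → ℝ) :
    ‖∑ i, c i • ψ i‖ ^ 2 = ∑ i, c i ^ 2 := by
  rw [← real_inner_self_eq_norm_sq, hψ.inner_sum]
  simp [sq]

theorem HilbertBasis.hasSum_inner_sq (b : HilbertBasis ι ℝ E) (v : E) :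
    HasSum (fun k => ⟪v, b k⟫_ℝ ^ 2) (‖v‖ ^ 2) := by
  rw [← real_inner_self_eq_norm_sq]
  simpa only [real_inner_comm v, sq] using b.hasSum_inner_mul_inner v v

theorem HilbertBasis.hasSum_norm_sum_inner_smul_sq {κ : Type*} [Fintype κ]
    (b : HilbertBasis ι ℝ E) {ψ : κ → E} (hψ : Orthonormal ℝ ψ) (v : κ → E) :
    HasSum (fun k => ‖∑ j, ⟪v j, b k⟫_ℝ • ψ j‖ ^ 2) (∑ j, ‖v j‖ ^ 2) := by
  simp only [hψ.norm_sum_smul_sq]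
  exact hasSum_sum fun j _ => b.hasSum_inner_sq (v j)

end Real

/-- The Hilbert–Schmidt norm of `P† L† L P`, where `P` is the orthogonal projection onto the span
of an orthonormal family `ψ`, equals the Frobenius norm of the matrix `M i j = ⟪L ψ_i, L ψ_j⟫`. -/
theorem stmt_6 {ι H : Type*} [NormedAddCommGroup H] [InnerProductSpace ℝ H] [CompleteSpace H]
    (b : HilbertBasis ι ℝ H) (L : H →L[ℝ] H)
    {n : ℕ} (ψ : Fin n → H) (hψ : Orthonormal ℝ ψ)
    (K : Submodule ℝ H) (hK : K = Submodule.span ℝ (Set.range ψ))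
    (P : H →L[ℝ] H) (hPK : ∀ x ∈ K, P x = x) (hPperp : ∀ x ∈ Kᗮ, P x = 0)
    (M : Matrix (Fin n) (Fin n) ℝ) (hM : ∀ i j, M i j = ⟪L (ψ i), L (ψ j)⟫_ℝ) :
    (Summable fun k => ‖(P.comp (((ContinuousLinearMap.adjoint L).comp L).comp P)) (b k)‖ ^ 2) ∧
      ∑' k, ‖(P.comp (((ContinuousLinearMap.adjoint L).comp L).comp P)) (b k)‖ ^ 2
        = ∑ i, ∑ j, M i j ^ 2 := by
  subst hK
  have hP := hψ.apply_eq_sum_inner_smul hPK hPperp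
  set v : Fin n → H := fun j => ∑ i, M j i • ψ i
  have hT : ∀ x, (P.comp (((ContinuousLinearMap.adjoint L).comp L).comp P)) x =
      ∑ j, ⟪v j, x⟫_ℝ • ψ j := by
    intro x
    simp only [ContinuousLinearMap.comp_apply]
    rw [hP]
    refine Finset.sum_congr rfl fun j _ => congrArg (· • ψ j) ?_
    simp only [v, ContinuousLinearMap.adjoint_inner_right, hP,
      map_sum, map_smul, inner_sum, sum_inner, real_inner_smul_left, real_inner_smul_right, hM]
    exact Finset.sum_congr rfl fun i _ => mul_comm _ _
  have hv : ∀ j, ‖v j‖ ^ 2 = ∑ i, M j i ^ 2 := fun j => hψ.norm_sum_smul_sq _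
  have hHS := b.hasSum_norm_sum_inner_smul_sq hψ v
  simp only [hv, ← hT] at hHS
  exact ⟨hHS.summable, hHS.tsum_eq⟩
end

section
/- Proposition (equivalence of full and span-restricted constraints for empirical risk minimization). Let H be a real Hilbert space with Hilbert basis (b k)_{k∈ι}, let ℓ : ℝ → ℝ be nonnegative, let λ_F > 0, and fix a finite sample s : Fin m → (H × H × H) × ℝ of triplets with labels. Let K be a closed subspace of H containing all components x_{h,t}, x_{i,t}, x_{j,t} of the sampled triplets, and let P be the orthogonal projection of H onto K. For a continuous linear operator L : H → H define the empirical risk R̂(L) = (1/m) ∑_{t} ℓ(y_t · (‖L x_{h,t} − L x_{i,t}‖² − ‖L x_{h,t} − L x_{j,t}‖²)). Let 𝒞₂ = { L : k ↦ ‖(L† ∘ L)(b k)‖² is summable and ∑' k, ‖(L† ∘ L)(b k)‖² ≤ λ_F² } and 𝒞₃ = { L : k ↦ ‖(P ∘ L† ∘ L ∘ P)(b k)‖² is summable and ∑' k, ‖(P ∘ L† ∘ L ∘ P)(b k)‖² ≤ λ_F² }. Then the infimum of R̂ over 𝒞₂ equals the infimum of R̂ over 𝒞₃; moreover, for every L ∈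 𝒞₃, the operator L ∘ P belongs to 𝒞₂ and R̂(L ∘ P) = R̂(L). -/
open ContinuousLinearMap
open scoped RealInnerProductSpace

section Aux

variable {ι H : Type*} [NormedAddCommGroup H] [InnerProductSpace ℝ H] [CompleteSpace H]

private lemma parseval_ennreal (b : HilbertBasis ι ℝ H) (x : H) :
    ENNReal.ofReal (‖x‖ ^ 2) = ∑' i, ENNReal.ofReal (⟪b i, x⟫ ^ 2) := by
  have hterm : ∀ i, ⟪x, b i⟫ * ⟪b i, x⟫ = ⟪b i, x⟫ ^ 2 := fun i => by
    rw [real_inner_comm x (b i)]; ring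
  have h1 : ∑' i, ⟪x, b i⟫ * ⟪b i, x⟫ = ‖x‖ ^ 2 := by
    rw [b.tsum_inner_mul_inner x x, real_inner_self_eq_norm_sq]
  rw [← h1, ENNReal.ofReal_tsum_of_nonneg
    (fun i => by rw [hterm i]; positivity) (b.summable_inner_mul_inner x x)]
  exact tsum_congr fun i => by rw [hterm i]

private lemma hs_adjoint (b : HilbertBasis ι ℝ H) (T : H →L[ℝ] H) :
    ∑' k, ENNReal.ofReal (‖T (b k)‖ ^ 2)
      = ∑' k, ENNReal.ofReal (‖(ContinuousLinearMap.adjoint T) (b k)‖ ^ 2) := by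
  calc ∑' k, ENNReal.ofReal (‖T (b k)‖ ^ 2)
      = ∑' k, ∑' j, ENNReal.ofReal (⟪b j, T (b k)⟫ ^ 2) :=
        tsum_congr fun k => parseval_ennreal b _
    _ = ∑' j, ∑' k, ENNReal.ofReal (⟪b j, T (b k)⟫ ^ 2) := ENNReal.tsum_comm
    _ = ∑' j, ∑' k, ENNReal.ofReal (⟪b k, (ContinuousLinearMap.adjoint T) (b j)⟫ ^ 2) := by
        refine tsum_congr fun j => tsum_congr fun k => ?_
        rw [← ContinuousLinearMap.adjoint_inner_left, real_inner_comm]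
    _ = ∑' j, ENNReal.ofReal (‖(ContinuousLinearMap.adjoint T) (b j)‖ ^ 2) :=
        tsum_congr fun j => (parseval_ennreal b _).symm

private lemma summable_tsum_le_iff {f : ι → ℝ} (hf : ∀ k, 0 ≤ f k) {c : ℝ} (hc : 0 ≤ c) :
    (Summable f ∧ ∑' k, f k ≤ c) ↔ ∑' k, ENNReal.ofReal (f k) ≤ ENNReal.ofReal c := by
  constructor
  · rintro ⟨hs, hle⟩
    rw [← ENNReal.ofReal_tsum_of_nonneg hf hs]
    exact ENNReal.ofReal_le_ofReal hle
  · intro h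
    have hne : ∑' k, ENNReal.ofReal (f k) ≠ ⊤ := ne_top_of_le_ne_top ENNReal.ofReal_ne_top h
    have hs : Summable f := by
      have h2 := ENNReal.summable_toReal hne
      have : (fun k => (ENNReal.ofReal (f k)).toReal) = f :=
        funext fun k => ENNReal.toReal_ofReal (hf k)
      rwa [this] at h2
    refine ⟨hs, ?_⟩
    rw [← ENNReal.ofReal_le_ofReal_iff hc, ENNReal.ofReal_tsum_of_nonneg hf hs]
    exact h

end Aux

/-- Equivalence of the full and span-restricted Hilbert–Schmidt norm constraints for empirical
risk minimization: the infimum of the empirical risk over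
`𝒞₂ = {L : ‖L† L‖_{S₂} ≤ λ_F}` equals the infimum over
`𝒞₃ = {L : ‖P† L† L P‖_{S₂} ≤ λ_F}`, and every `L ∈ 𝒞₃` yields `L ∘ P ∈ 𝒞₂` with the same
empirical risk, where `P` is the orthogonal projection onto a closed subspace `K` containing all
sampled points. -/
theorem stmt_15 {ι H : Type*} [NormedAddCommGroup H] [InnerProductSpace ℝ H] [CompleteSpace H]
    (b : HilbertBasis ι ℝ H) (ℓ : ℝ → ℝ) (hℓ : ∀ x, 0 ≤ ℓ x) (lF : ℝ) (hlF : 0 < lF)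
    (m : ℕ) (s : Fin m → (H × H × H) × ℝ)
    (K : Submodule ℝ H) (hKc : IsClosed (K : Set H))
    (hs : ∀ t, (s t).1.1 ∈ K ∧ (s t).1.2.1 ∈ K ∧ (s t).1.2.2 ∈ K)
    (P : H →L[ℝ] H) (hPK : ∀ x ∈ K, P x = x) (hPperp : ∀ x ∈ Kᗮ, P x = 0)
    (Remp : (H →L[ℝ] H) → ℝ)
    (hRemp : ∀ L, Remp L = (1 / (m : ℝ)) * ∑ t, ℓ ((s t).2 *
      (‖L (s t).1.1 - L (s t).1.2.1‖ ^ 2 - ‖L (s t).1.1 - L (s t).1.2.2‖ ^ 2)))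
    (C2 C3 : Set (H →L[ℝ] H))
    (hC2 : C2 = { L | (Summable fun k => ‖((ContinuousLinearMap.adjoint L).comp L) (b k)‖ ^ 2) ∧
        ∑' k, ‖((ContinuousLinearMap.adjoint L).comp L) (b k)‖ ^ 2 ≤ lF ^ 2 })
    (hC3 : C3 = { L |
        (Summable fun k =>
          ‖(P.comp (((ContinuousLinearMap.adjoint L).comp L).comp P)) (b k)‖ ^ 2) ∧
        ∑' k, ‖(P.comp (((ContinuousLinearMap.adjoint L).comp L).comp P)) (b k)‖ ^ 2 ≤ lF ^ 2 }) :
    sInf (Remp '' C2) = sInf (Remp '' C3) ∧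
      ∀ L ∈ C3, L.comp P ∈ C2 ∧ Remp (L.comp P) = Remp L := by
  haveI : CompleteSpace K := hKc.completeSpace_coe
  -- P agrees with the orthogonal projection onto K
  have hPx : ∀ x : H, P x = (K.orthogonalProjectionOnto x : H) := by
    intro x
    have hmem : x - (K.orthogonalProjectionOnto x : H) ∈ Kᗮ :=
      K.sub_starProjection_mem_orthogonal x
    calc P x = P ((K.orthogonalProjectionOnto x : H) + (x - K.orthogonalProjectionOnto x)) := by
          rw [add_sub_cancel]
      _ = P (K.orthogonalProjectionOnto x : H) + P (x - K.orthogonalProjectionOnto x) := map_add _ _ _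
      _ = (K.orthogonalProjectionOnto x : H) := by
          rw [hPK _ (K.orthogonalProjectionOnto x).2, hPperp _ hmem, add_zero]
  have hPeq : P = K.subtypeL ∘L K.orthogonalProjectionOnto :=
    ContinuousLinearMap.ext fun x => by simp [hPx x]
  have hPsa : IsSelfAdjoint P := by rw [hPeq]; exact isSelfAdjoint_starProjection K
  have hPnorm : ∀ x : H, ‖P x‖ ≤ ‖x‖ := by
    intro x
    rw [hPx]
    calc ‖(K.orthogonalProjectionOnto x : H)‖ = ‖K.orthogonalProjectionOnto x‖ := rfl
      _ ≤ ‖K.orthogonalProjectionOnto‖ * ‖x‖ := (K.orthogonalProjectionOnto).le_opNorm x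
      _ ≤ 1 * ‖x‖ := by
          gcongr
          exact Submodule.orthogonalProjectionOnto_norm_le K
      _ = ‖x‖ := one_mul ‖x‖
  -- the key operator identity
  have key : ∀ L : H →L[ℝ] H,
      (ContinuousLinearMap.adjoint (L.comp P)).comp (L.comp P)
        = P.comp (((ContinuousLinearMap.adjoint L).comp L).comp P) := by
    intro L
    rw [ContinuousLinearMap.adjoint_comp, hPsa.adjoint_eq]
    ext x; simp
  -- Remp is unchanged by composing with P
  have hRempP : ∀ L : H →L[ℝ] H, Remp (L.comp P) = Remp L := by
    intro L
    rw [hRemp, hRemp]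
    congr 1
    refine Finset.sum_congr rfl fun t _ => ?_
    rw [ContinuousLinearMap.comp_apply, ContinuousLinearMap.comp_apply,
      ContinuousLinearMap.comp_apply, hPK _ (hs t).1, hPK _ (hs t).2.1, hPK _ (hs t).2.2]
  -- L ∈ C3 → L ∘ P ∈ C2
  have hC3toC2 : ∀ L ∈ C3, L.comp P ∈ C2 := by
    intro L hL
    rw [hC3] at hL
    rw [hC2, Set.mem_setOf_eq, key L]
    exact hL
  -- C2 ⊆ C3 via Hilbert–Schmidt norm comparison
  have hC2subC3 : C2 ⊆ C3 := by
    intro L hL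
    set A := (ContinuousLinearMap.adjoint L).comp L with hA
    have hAsa : IsSelfAdjoint A := by
      rw [IsSelfAdjoint, ContinuousLinearMap.star_eq_adjoint, hA,
        ContinuousLinearMap.adjoint_comp, ContinuousLinearMap.adjoint_adjoint]
    rw [hC2, Set.mem_setOf_eq] at hL
    rw [hC3, Set.mem_setOf_eq]
    have hlF2 : (0:ℝ) ≤ lF ^ 2 := sq_nonneg lF
    rw [summable_tsum_le_iff (fun k => sq_nonneg _) hlF2]
    rw [summable_tsum_le_iff (fun k => sq_nonneg _) hlF2] at hL
    -- pointwise contraction twice + adjoint invariance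
    have step1 : ∑' k, ENNReal.ofReal (‖(P.comp (A.comp P)) (b k)‖ ^ 2)
        ≤ ∑' k, ENNReal.ofReal (‖(A.comp P) (b k)‖ ^ 2) := by
      refine ENNReal.tsum_le_tsum fun k => ENNReal.ofReal_le_ofReal ?_
      simp only [ContinuousLinearMap.comp_apply]
      exact pow_le_pow_left₀ (norm_nonneg _) (hPnorm _) 2
    have step2 : ∑' k, ENNReal.ofReal (‖(A.comp P) (b k)‖ ^ 2)
        = ∑' k, ENNReal.ofReal (‖(P.comp A) (b k)‖ ^ 2) := by
      rw [hs_adjoint b (A.comp P), ContinuousLinearMap.adjoint_comp, hPsa.adjoint_eq,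
        hAsa.adjoint_eq]
    have step3 : ∑' k, ENNReal.ofReal (‖(P.comp A) (b k)‖ ^ 2)
        ≤ ∑' k, ENNReal.ofReal (‖A (b k)‖ ^ 2) := by
      refine ENNReal.tsum_le_tsum fun k => ENNReal.ofReal_le_ofReal ?_
      simp only [ContinuousLinearMap.comp_apply]
      exact pow_le_pow_left₀ (norm_nonneg _) (hPnorm _) 2
    exact le_trans step1 (le_trans step2.le (le_trans step3 hL))
  -- images coincide
  have himg : Remp '' C2 = Remp '' C3 := by
    apply Set.Subset.antisymm
    · exact Set.image_mono hC2subC3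
    · rintro r ⟨L, hL, rfl⟩
      exact ⟨L.comp P, hC3toC2 L hL, hRempP L⟩
  exact ⟨by rw [himg], fun L hL => ⟨hC3toC2 L hL, hRempP L⟩⟩
end

section
/- Proposition (reduction of span-restricted kernelized metric learning to a finite-dimensional convex program). Let H be a real Hilbert space with Hilbert basis (b k)_{k∈ι}, let ℓ : ℝ → ℝ be nonnegative, let λ_F > 0, let ψ : Fin n → H be an orthonormal family, K the (finite-dimensional, hence closed) span of {ψ 1, …, ψ n}, and P the orthogonal projection of H onto K. Fix a finite sample s : Fin m → (H × H × H) × ℝ of triplets with labels whose triple components all lie in K, and let c(x) ∈ ℝⁿ denote the coordinate vector c(x)_k = ⟪ψ k, x⟫ of x ∈ K. For a continuous linear operator L : H → H define R̂_H(L) = (1/m) ∑_{t} ℓ(y_t · (‖L x_{h,t} − L x_{i,t}‖² − ‖L x_{h,t} − L x_{j,t}‖²)), and for a real n × n matrix M define R̂_fin(M) = (1/m) ∑_{t} ℓ(y_t · ((c(x_{h,t}) − c(x_{i,t}))ᵀ M (c(x_{h,t}) − c(x_{i,t})) − (c(x_{h,t}) − c(x_{j,t}))ᵀ M (c(x_{h,t})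 − c(x_{j,t})))). Then the infimum of R̂_H over { L : k ↦ ‖(P ∘ L† ∘ L ∘ P)(b k)‖² is summable and ∑' k, ‖(P ∘ L† ∘ L ∘ P)(b k)‖² ≤ λ_F² } equals the infimum of R̂_fin over { M : M is positive semidefinite and sqrt(∑_{i,j} (M i j)²) ≤ λ_F }. -/
open scoped InnerProductSpace
open Matrix

section Helpers

variable {H : Type*} [NormedAddCommGroup H] [InnerProductSpace ℝ H]

lemma repr_eq' {n : ℕ} {ψ : Fin n → H} (hψ : Orthonormal ℝ ψ) {z : H}
    (hz : z ∈ Submodule.span ℝ (Set.range ψ)) :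
    ∑ j, ⟪ψ j, z⟫_ℝ • ψ j = z := by
  induction hz using Submodule.span_induction with
  | mem x hx =>
    obtain ⟨i, rfl⟩ := hx
    simp [orthonormal_iff_ite.mp hψ]
  | zero => simp
  | add x y _ _ hx hy =>
    simp only [inner_add_right, add_smul, Finset.sum_add_distrib, hx, hy]
  | smul r x _ hx =>
    simp only [inner_smul_right, mul_smul, ← Finset.smul_sum, hx]

lemma norm_sq_eq' {n : ℕ} {ψ : Fin n → H} (hψ : Orthonormal ℝ ψ)
    (L : H →L[ℝ] H) (M : Matrix (Fin n) (Fin n) ℝ)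
    (hM : ∀ i j, M i j = ⟪L (ψ i), L (ψ j)⟫_ℝ) {z : H}
    (hz : z ∈ Submodule.span ℝ (Set.range ψ)) :
    ‖L z‖ ^ 2 = (fun j => ⟪ψ j, z⟫_ℝ) ⬝ᵥ M.mulVec (fun j => ⟪ψ j, z⟫_ℝ) := by
  conv_lhs => rw [← repr_eq' hψ hz]
  rw [← real_inner_self_eq_norm_sq, map_sum]
  simp_rw [_root_.map_smul, sum_inner, inner_sum, real_inner_smul_left, real_inner_smul_right,
    dotProduct, Matrix.mulVec, hM]
  refine Finset.sum_congr rfl fun i _ => ?_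
  simp only [dotProduct, Finset.mul_sum]
  refine Finset.sum_congr rfl fun j _ => ?_
  ring

lemma risk_term_eq' {n m : ℕ} {ψ : Fin n → H} (hψ : Orthonormal ℝ ψ)
    {K : Submodule ℝ H} (hK : K = Submodule.span ℝ (Set.range ψ))
    (s : Fin m → (H × H × H) × ℝ)
    (hs : ∀ t, (s t).1.1 ∈ K ∧ (s t).1.2.1 ∈ K ∧ (s t).1.2.2 ∈ K)
    (coord : H → Fin n → ℝ) (hcoord : ∀ x k, coord x k = ⟪ψ k, x⟫_ℝ)
    (L : H →L[ℝ] H) (M : Matrix (Fin n) (Fin n) ℝ)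
    (hM : ∀ i j, M i j = ⟪L (ψ i), L (ψ j)⟫_ℝ) (t : Fin m) :
    (s t).2 * (‖L (s t).1.1 - L (s t).1.2.1‖ ^ 2 - ‖L (s t).1.1 - L (s t).1.2.2‖ ^ 2)
    = (s t).2 * ((coord (s t).1.1 - coord (s t).1.2.1) ⬝ᵥ
          M.mulVec (coord (s t).1.1 - coord (s t).1.2.1)
        - (coord (s t).1.1 - coord (s t).1.2.2) ⬝ᵥ
          M.mulVec (coord (s t).1.1 - coord (s t).1.2.2)) := by
  obtain ⟨h1, h2, h3⟩ := hs t
  have key : ∀ x y, x ∈ K → y ∈ K →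
      ‖L x - L y‖ ^ 2 = (coord x - coord y) ⬝ᵥ M.mulVec (coord x - coord y) := by
    intro x y hx hy
    have hxy : x - y ∈ Submodule.span ℝ (Set.range ψ) := hK ▸ K.sub_mem hx hy
    have hc : (coord x - coord y) = fun j => ⟪ψ j, x - y⟫_ℝ := by
      funext j; simp [hcoord, inner_sub_right]
    rw [hc, ← norm_sq_eq' hψ L M hM hxy, map_sub]
  rw [key _ _ h1 h2, key _ _ h1 h3]

lemma bessel' {n : ℕ} {ψ : Fin n → H} (hψ : Orthonormal ℝ ψ) (x : H) :
    ∑ i, ⟪ψ i, x⟫_ℝ ^ 2 ≤ ‖x‖ ^ 2 := by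
  have := hψ.sum_inner_products_le (s := Finset.univ) x
  simpa [Real.norm_eq_abs, sq_abs] using this

lemma parseval' [CompleteSpace H] {ι : Type*} (b : HilbertBasis ι ℝ H) (x : H) :
    HasSum (fun k => ⟪x, b k⟫_ℝ ^ 2) (‖x‖ ^ 2) := by
  have h := b.hasSum_inner_mul_inner x x
  rw [real_inner_self_eq_norm_sq] at h
  have hfun : (fun k => ⟪x, b k⟫_ℝ ^ 2) = fun i => ⟪x, b i⟫_ℝ * ⟪b i, x⟫_ℝ := by
    funext k; rw [sq, real_inner_comm x (b k)]
  rw [hfun]; exact h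

end Helpers

/-- Reduction of span-restricted kernelized metric learning to a finite-dimensional convex
program: the infimum of the empirical risk over operators `L` with `‖P† L† L P‖_{S₂} ≤ λ_F`
(`P` the orthogonal projection onto the span `K` of an orthonormal family `ψ` containing all
sampled points) equals the infimum of the finite-dimensional empirical risk over psd matrices
`M` with Frobenius norm at most `λ_F`, in the KPCA coordinates `c(x)_k = ⟪ψ k, x⟫`. -/
theorem stmt_16 {ι H : Type*} [NormedAddCommGroup H] [InnerProductSpace ℝ H] [CompleteSpace H]
    (b : HilbertBasis ι ℝ H) (ℓ : ℝ → ℝ) (hℓ : ∀ x, 0 ≤ ℓ x) (lF : ℝ) (hlF : 0 < lF)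
    {n : ℕ} (ψ : Fin n → H) (hψ : Orthonormal ℝ ψ)
    (K : Submodule ℝ H) (hK : K = Submodule.span ℝ (Set.range ψ))
    (P : H →L[ℝ] H) (hPK : ∀ x ∈ K, P x = x) (hPperp : ∀ x ∈ Kᗮ, P x = 0)
    (m : ℕ) (s : Fin m → (H × H × H) × ℝ)
    (hs : ∀ t, (s t).1.1 ∈ K ∧ (s t).1.2.1 ∈ K ∧ (s t).1.2.2 ∈ K)
    (coord : H → Fin n → ℝ) (hcoord : ∀ x k, coord x k = ⟪ψ k, x⟫_ℝ)
    (RH : (H →L[ℝ] H) → ℝ)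
    (hRH : ∀ L, RH L = (1 / (m : ℝ)) * ∑ t, ℓ ((s t).2 *
      (‖L (s t).1.1 - L (s t).1.2.1‖ ^ 2 - ‖L (s t).1.1 - L (s t).1.2.2‖ ^ 2)))
    (Rfin : Matrix (Fin n) (Fin n) ℝ → ℝ)
    (hRfin : ∀ M, Rfin M = (1 / (m : ℝ)) * ∑ t, ℓ ((s t).2 *
      ((coord (s t).1.1 - coord (s t).1.2.1) ⬝ᵥ
          M.mulVec (coord (s t).1.1 - coord (s t).1.2.1)
        - (coord (s t).1.1 - coord (s t).1.2.2) ⬝ᵥ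
          M.mulVec (coord (s t).1.1 - coord (s t).1.2.2)))) :
    sInf (RH '' { L |
        (Summable fun k =>
          ‖(P.comp (((ContinuousLinearMap.adjoint L).comp L).comp P)) (b k)‖ ^ 2) ∧
        ∑' k, ‖(P.comp (((ContinuousLinearMap.adjoint L).comp L).comp P)) (b k)‖ ^ 2 ≤ lF ^ 2 })
      = sInf (Rfin '' { M | M.PosSemidef ∧ Real.sqrt (∑ i, ∑ j, M i j ^ 2) ≤ lF }) := by
  classical
  have hKψ : ∀ i, ψ i ∈ K := fun i => hK ▸ Submodule.subset_span ⟨i, rfl⟩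
  haveI : FiniteDimensional ℝ K := by
    rw [hK]; exact FiniteDimensional.span_of_finite ℝ (Set.finite_range ψ)
  -- decomposition and self-adjointness of P
  have hPdecomp : ∀ x : H, ∃ y ∈ K, ∃ z ∈ Kᗮ, x = y + z ∧ P x = y := by
    intro x
    obtain ⟨y, hy, z, hz, rfl⟩ := K.exists_add_mem_mem_orthogonal x
    exact ⟨y, hy, z, hz, rfl, by rw [map_add, hPK y hy, hPperp z hz, add_zero]⟩
  have hPsa : ∀ x y : H, ⟪P x, y⟫_ℝ = ⟪x, P y⟫_ℝ := by
    intro x y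
    obtain ⟨a, ha, c, hc, hxe, hPx⟩ := hPdecomp x
    obtain ⟨d, hd, e, he, hye, hPy⟩ := hPdecomp y
    have h1 : ⟪a, e⟫_ℝ = 0 := (Submodule.mem_orthogonal K e).mp he a ha
    have h2 : ⟪c, d⟫_ℝ = 0 := by
      rw [real_inner_comm]; exact (Submodule.mem_orthogonal K c).mp hc d hd
    rw [hPx, hPy, hxe, hye, inner_add_right, inner_add_left, h1, h2, add_zero]
  have hPψ : ∀ i, P (ψ i) = ψ i := fun i => hPK _ (hKψ i)
  have hcoordP : ∀ (j : Fin n) (x : H), ⟪ψ j, P x⟫_ℝ = ⟪ψ j, x⟫_ℝ := by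
    intro j x; rw [← hPsa, hPψ]
  -- value equality given representing matrix
  have hval : ∀ (L : H →L[ℝ] H) (M : Matrix (Fin n) (Fin n) ℝ),
      (∀ i j, M i j = ⟪L (ψ i), L (ψ j)⟫_ℝ) → RH L = Rfin M := by
    intro L M hM
    rw [hRH, hRfin]
    congr 1
    exact Finset.sum_congr rfl fun t _ => by
      rw [risk_term_eq' hψ hK s hs coord hcoord L M hM t]
  have himage : RH '' { L |
        (Summable fun k =>
          ‖(P.comp (((ContinuousLinearMap.adjoint L).comp L).comp P)) (b k)‖ ^ 2) ∧
        ∑' k, ‖(P.comp (((ContinuousLinearMap.adjoint L).comp L).comp P)) (b k)‖ ^ 2 ≤ lF ^ 2 }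
      = Rfin '' { M | M.PosSemidef ∧ Real.sqrt (∑ i, ∑ j, M i j ^ 2) ≤ lF } := by
    apply Set.Subset.antisymm
    · -- direction A: operator to matrix
      rintro _ ⟨L, ⟨hsum, hle⟩, rfl⟩
      set A := P.comp (((ContinuousLinearMap.adjoint L).comp L).comp P) with hAdef
      set M : Matrix (Fin n) (Fin n) ℝ := Matrix.of fun i j => ⟪L (ψ i), L (ψ j)⟫_ℝ with hMdef
      have hM : ∀ i j, M i j = ⟪L (ψ i), L (ψ j)⟫_ℝ := fun i j => rfl
      have hAl : ∀ u w : H, ⟪A u, w⟫_ℝ = ⟪L (P u), L (P w)⟫_ℝ := by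
        intro u w
        simp only [hAdef, ContinuousLinearMap.comp_apply]
        rw [hPsa, ContinuousLinearMap.adjoint_inner_left]
      have hAsa : ∀ x y : H, ⟪A x, y⟫_ℝ = ⟪x, A y⟫_ℝ := by
        intro x y
        calc ⟪A x, y⟫_ℝ = ⟪L (P x), L (P y)⟫_ℝ := hAl x y
          _ = ⟪L (P y), L (P x)⟫_ℝ := real_inner_comm _ _
          _ = ⟪A y, x⟫_ℝ := (hAl y x).symm
          _ = ⟪x, A y⟫_ℝ := real_inner_comm _ _
      have hAψ : ∀ i j, ⟪ψ i, A (ψ j)⟫_ℝ = M i j := by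
        intro i j
        simp only [hAdef, ContinuousLinearMap.comp_apply, hPψ]
        rw [← hPsa, hPψ, ContinuousLinearMap.adjoint_inner_right]
        exact (hM i j).symm
      refine ⟨M, ⟨posSemidef_iff_dotProduct_mulVec.mpr ⟨?_, ?_⟩, ?_⟩, (hval L M hM).symm⟩
      · -- Hermitian
        ext i j
        simp only [Matrix.conjTranspose_apply, star_trivial]
        rw [hM, hM, real_inner_comm]
      · -- psd quadratic form
        intro x
        simp only [star_trivial]
        set z := ∑ i, x i • ψ i with hz
        have hzmem : z ∈ Submodule.span ℝ (Set.range ψ) :=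
          Submodule.sum_mem _ fun i _ => Submodule.smul_mem _ _ (Submodule.subset_span ⟨i, rfl⟩)
        have hco : (fun j => ⟪ψ j, z⟫_ℝ) = x := by
          funext j
          simp [hz, inner_sum, real_inner_smul_right, orthonormal_iff_ite.mp hψ]
        have h := norm_sq_eq' hψ L M hM hzmem
        rw [hco] at h
        rw [← h]
        positivity
      · -- Frobenius bound
        have step1 : ∑ i, ∑ j, M i j ^ 2 ≤ ∑ j, ‖A (ψ j)‖ ^ 2 := by
          rw [Finset.sum_comm]
          refine Finset.sum_le_sum fun j _ => ?_
          calc ∑ i, M i j ^ 2 = ∑ i, ⟪ψ i, A (ψ j)⟫_ℝ ^ 2 := by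
                refine Finset.sum_congr rfl fun i _ => by rw [hAψ]
            _ ≤ ‖A (ψ j)‖ ^ 2 := bessel' hψ _
        have h1 : ∀ j : Fin n, HasSum (fun k => ⟪ψ j, A (b k)⟫_ℝ ^ 2) (‖A (ψ j)‖ ^ 2) := by
          intro j
          have heq : (fun k => ⟪ψ j, A (b k)⟫_ℝ ^ 2) = fun k => ⟪A (ψ j), b k⟫_ℝ ^ 2 := by
            funext k
            rw [← hAsa, real_inner_comm]
          rw [heq]
          exact parseval' b (A (ψ j))
        have step2 : ∑ j, ‖A (ψ j)‖ ^ 2 ≤ ∑' k, ‖A (b k)‖ ^ 2 := by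
          have h2 : (∑ j, ‖A (ψ j)‖ ^ 2) = ∑' k, ∑ j, ⟪ψ j, A (b k)⟫_ℝ ^ 2 := by
            rw [Summable.tsum_finsetSum (fun j _ => (h1 j).summable)]
            exact Finset.sum_congr rfl fun j _ => ((h1 j).tsum_eq).symm
          rw [h2]
          refine Summable.tsum_le_tsum (fun k => bessel' hψ _) ?_ hsum
          exact (hasSum_sum fun j _ => h1 j).summable
        have hfin : ∑ i, ∑ j, M i j ^ 2 ≤ lF ^ 2 := (step1.trans step2).trans hle
        calc Real.sqrt (∑ i, ∑ j, M i j ^ 2) ≤ Real.sqrt (lF ^ 2) := Real.sqrt_le_sqrt hfin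
          _ = lF := Real.sqrt_sq hlF.le
    · -- direction B: matrix to operator
      rintro _ ⟨M, ⟨hMpsd, hMfrob⟩, rfl⟩
      obtain ⟨S, hSsa, -, hSM⟩ := CFC.exists_sqrt_of_isSelfAdjoint_of_quasispectrumRestricts
        (hMpsd.1 : IsSelfAdjoint M)
        (open scoped MatrixOrder in QuasispectrumRestricts.nnreal_of_nonneg hMpsd.nonneg)
      have hSsymm : ∀ i j, S i j = S j i := by
        intro i j
        have h := congrFun (congrFun hSsa.star_eq j) i
        simpa [Matrix.star_apply] using h
      have hSS : ∀ i j, ∑ k, S i k * S k j = M i j := by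
        intro i j
        rw [← hSM, Matrix.mul_apply]
      set L : H →L[ℝ] H :=
        ∑ k : Fin n, ∑ j : Fin n, S k j • ((innerSL ℝ (ψ j)).smulRight (ψ k)) with hLdef
      have hLapp : ∀ x, L x = ∑ k, (∑ j, S k j * ⟪ψ j, x⟫_ℝ) • ψ k := by
        intro x
        simp only [hLdef, ContinuousLinearMap.sum_apply, ContinuousLinearMap.smul_apply,
          ContinuousLinearMap.smulRight_apply, innerSL_apply_apply, Finset.sum_smul, smul_smul]
      have hinner : ∀ (j : Fin n) x, ⟪ψ j, L x⟫_ℝ = ∑ j', S j j' * ⟪ψ j', x⟫_ℝ := by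
        intro j x
        rw [hLapp, inner_sum]
        simp_rw [real_inner_smul_right]
        simp [orthonormal_iff_ite.mp hψ]
      have hLψ : ∀ i, L (ψ i) = ∑ k, S k i • ψ k := by
        intro i
        rw [hLapp]
        refine Finset.sum_congr rfl fun k _ => ?_
        congr 1
        simp [orthonormal_iff_ite.mp hψ]
      have hM : ∀ i j, M i j = ⟪L (ψ i), L (ψ j)⟫_ℝ := by
        intro i j
        rw [hLψ, hLψ, sum_inner]
        simp_rw [inner_sum, real_inner_smul_left, real_inner_smul_right,
          orthonormal_iff_ite.mp hψ, mul_ite, mul_one, mul_zero, Finset.sum_ite_eq]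
        rw [← hSS i j]
        refine Finset.sum_congr rfl fun k _ => ?_
        rw [hSsymm k i]
        simp
      have hLsa : ContinuousLinearMap.adjoint L = L := by
        symm
        rw [ContinuousLinearMap.eq_adjoint_iff]
        intro x y
        rw [hLapp x, sum_inner, hLapp y, inner_sum]
        simp_rw [real_inner_smul_left, real_inner_smul_right, Finset.sum_mul]
        rw [Finset.sum_comm]
        refine Finset.sum_congr rfl fun k _ => Finset.sum_congr rfl fun j _ => ?_
        rw [hSsymm j k, real_inner_comm x (ψ k)]
        ring
      have hLP : ∀ x, L (P x) = L x := by
        intro x; rw [hLapp, hLapp]; simp_rw [hcoordP]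
      set v : Fin n → H := fun i => ∑ j, M i j • ψ j with hvdef
      have hvinner : ∀ i x, ⟪v i, x⟫_ℝ = ∑ j, M i j * ⟪ψ j, x⟫_ℝ := by
        intro i x
        simp only [hvdef, sum_inner, real_inner_smul_left]
      have hLL : ∀ x, L (L x) = ∑ i, ⟪v i, x⟫_ℝ • ψ i := by
        intro x
        rw [hLapp (L x)]
        refine Finset.sum_congr rfl fun k _ => ?_
        congr 1
        rw [hvinner]
        simp_rw [hinner, Finset.mul_sum]
        rw [Finset.sum_comm]
        refine Finset.sum_congr rfl fun j' _ => ?_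
        rw [← hSS k j', Finset.sum_mul]
        refine Finset.sum_congr rfl fun j _ => ?_
        ring
      set A := P.comp (((ContinuousLinearMap.adjoint L).comp L).comp P) with hAdef
      have hAx : ∀ x, A x = ∑ i, ⟪v i, x⟫_ℝ • ψ i := by
        intro x
        simp only [hAdef, ContinuousLinearMap.comp_apply, hLsa]
        rw [hLP, hLL]
        exact hPK _ (hK ▸ Submodule.sum_mem _ fun i _ =>
          Submodule.smul_mem _ _ (Submodule.subset_span ⟨i, rfl⟩))
      have hnormA : ∀ x, ‖A x‖ ^ 2 = ∑ i, ⟪v i, x⟫_ℝ ^ 2 := by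
        intro x
        rw [hAx, ← real_inner_self_eq_norm_sq, sum_inner]
        simp_rw [inner_sum, real_inner_smul_left, real_inner_smul_right,
          orthonormal_iff_ite.mp hψ, mul_ite, mul_one, mul_zero, Finset.sum_ite_eq, sq]
        simp
      have hvnorm : ∀ i, ‖v i‖ ^ 2 = ∑ j, M i j ^ 2 := by
        intro i
        rw [← real_inner_self_eq_norm_sq, hvinner]
        refine Finset.sum_congr rfl fun j _ => ?_
        have hj : ⟪ψ j, v i⟫_ℝ = M i j := by
          simp only [hvdef]
          simp [inner_sum, real_inner_smul_right, orthonormal_iff_ite.mp hψ]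
        rw [hj]; ring
      have h1 : ∀ i : Fin n, HasSum (fun k => ⟪v i, b k⟫_ℝ ^ 2) (∑ j, M i j ^ 2) := by
        intro i
        have := parseval' b (v i)
        rwa [hvnorm i] at this
      have hHS : HasSum (fun k => ‖A (b k)‖ ^ 2) (∑ i, ∑ j, M i j ^ 2) := by
        have h2 := hasSum_sum (s := Finset.univ) fun i _ => h1 i
        have heq : (fun k => ‖A (b k)‖ ^ 2) = fun k => ∑ i, ⟪v i, b k⟫_ℝ ^ 2 :=
          funext fun k => hnormA (b k)
        rw [heq]
        exact h2
      have hfrob2 : ∑ i, ∑ j, M i j ^ 2 ≤ lF ^ 2 := by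
        have h0 : 0 ≤ ∑ i, ∑ j, M i j ^ 2 :=
          Finset.sum_nonneg fun i _ => Finset.sum_nonneg fun j _ => sq_nonneg _
        calc ∑ i, ∑ j, M i j ^ 2 = Real.sqrt (∑ i, ∑ j, M i j ^ 2) ^ 2 := (Real.sq_sqrt h0).symm
          _ ≤ lF ^ 2 := pow_le_pow_left₀ (Real.sqrt_nonneg _) hMfrob 2
      exact ⟨L, ⟨hHS.summable, by rw [hHS.tsum_eq]; exact hfrob2⟩, hval L M hM⟩
  rw [himage]
end

section
/- Representer theorem for kernelized metric learning. Let H and H' be real Hilbert spaces, assume there exists an orthonormal family in H' indexed by Fin n, let φ : Fin n → H and ψ : Fin n → H be families of vectors whose linear spans are equal, and set v i ∈ ℝⁿ with (v i)_k = ⟪φ i, ψ k⟫. Let f be any real-valued function on real n × n matrices that is bounded below. Then the infimum, over all continuous linear maps L : H → H', of f applied to the matrix (i, j) ↦ ⟪L(φ i), L(φ j)⟫ equals the infimum, over all real n × n matrices L', of f applied to the matrix (i, j) ↦ (v i)ᵀ (L'ᵀ L') (v j). -/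
open scoped InnerProductSpace
open Matrix

/-- Representer theorem for kernelized metric learning: if the spans of the families `φ` and `ψ`
coincide and `v i k = ⟪φ i, ψ k⟫`, then for any function `f` of the Gram matrix that is bounded
below, the infimum of `f ((i,j) ↦ ⟪L φ_i, L φ_j⟫)` over continuous linear maps `L : H → H'`
equals the infimum of `f ((i,j) ↦ (v i)ᵀ L'ᵀ L' (v j))` over `n × n` real matrices `L'`. -/
theorem stmt_17 {H H' : Type*} [NormedAddCommGroup H] [InnerProductSpace ℝ H]
    [NormedAddCommGroup H'] [InnerProductSpace ℝ H']
    {n : ℕ} (e : Fin n → H') (he : Orthonormal ℝ e)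
    (φ ψ : Fin n → H)
    (hspan : Submodule.span ℝ (Set.range φ) = Submodule.span ℝ (Set.range ψ))
    (v : Fin n → Fin n → ℝ) (hv : ∀ i k, v i k = ⟪φ i, ψ k⟫_ℝ)
    (f : Matrix (Fin n) (Fin n) ℝ → ℝ) (hf : BddBelow (Set.range f)) :
    (⨅ L : H →L[ℝ] H', f (Matrix.of fun i j => ⟪L (φ i), L (φ j)⟫_ℝ))
      = ⨅ L' : Matrix (Fin n) (Fin n) ℝ,
          f (Matrix.of fun i j => v i ⬝ᵥ (L'ᵀ * L').mulVec (v j)) := by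
  classical
  -- boundedness of both ranges
  have hbdd1 : BddBelow (Set.range fun L : H →L[ℝ] H' =>
      f (Matrix.of fun i j => ⟪L (φ i), L (φ j)⟫_ℝ)) :=
    hf.mono (Set.range_comp_subset_range _ f)
  have hbdd2 : BddBelow (Set.range fun L' : Matrix (Fin n) (Fin n) ℝ =>
      f (Matrix.of fun i j => v i ⬝ᵥ (L'ᵀ * L').mulVec (v j))) :=
    hf.mono (Set.range_comp_subset_range _ f)
  -- direction: matrix → operator
  have key2 : ∀ L' : Matrix (Fin n) (Fin n) ℝ, ∃ L : H →L[ℝ] H',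
      (Matrix.of fun i j => ⟪L (φ i), L (φ j)⟫_ℝ)
        = (Matrix.of fun i j => v i ⬝ᵥ (L'ᵀ * L').mulVec (v j)) := by
    intro L'
    refine ⟨∑ k, ∑ l, L' k l • ((innerSL ℝ (ψ l)).smulRight (e k)), ?_⟩
    have hL : ∀ x : H, (∑ k, ∑ l, L' k l • ((innerSL ℝ (ψ l)).smulRight (e k))) x
        = ∑ k, (L'.mulVec fun l => ⟪ψ l, x⟫_ℝ) k • e k := by
      intro x
      simp [ContinuousLinearMap.sum_apply, Matrix.mulVec, dotProduct,
        Finset.sum_smul, smul_smul]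
    ext i j
    simp only [Matrix.of_apply]
    rw [hL, hL, he.inner_sum]
    have hvv : ∀ i, (fun l => ⟪ψ l, φ i⟫_ℝ) = v i := by
      intro i; funext l; rw [hv i l, real_inner_comm]
    rw [hvv, hvv]
    rw [← Matrix.mulVec_mulVec, dotProduct_mulVec, Matrix.vecMul_transpose]
    simp [dotProduct, RCLike.conj_to_real]
  -- direction: operator → matrix
  have key1 : ∀ L : H →L[ℝ] H', ∃ L' : Matrix (Fin n) (Fin n) ℝ,
      (Matrix.of fun i j => ⟪L (φ i), L (φ j)⟫_ℝ)
        = (Matrix.of fun i j => v i ⬝ᵥ (L'ᵀ * L').mulVec (v j)) := by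
    intro L
    set S := Submodule.span ℝ (Set.range φ) with hS
    -- the "feature" map
    set T : S →ₗ[ℝ] (Fin n → ℝ) :=
      { toFun := fun s => fun k => ⟪ψ k, (s : H)⟫_ℝ
        map_add' := by intro a b; funext k; simp [inner_add_right]
        map_smul' := by intro c a; funext k; simp [inner_smul_right] } with hT
    have hTinj : Function.Injective T := by
      rw [← LinearMap.ker_eq_bot]
      rw [Submodule.eq_bot_iff]
      rintro ⟨s, hs⟩ hker
      have h0 : ∀ k, ⟪ψ k, s⟫_ℝ = 0 := fun k => congrFun (LinearMap.mem_ker.mp hker) k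
      have horth : ∀ u ∈ Submodule.span ℝ (Set.range ψ), ⟪u, s⟫_ℝ = 0 := by
        intro u hu
        induction hu using Submodule.span_induction with
        | mem u hu => obtain ⟨k, rfl⟩ := hu; exact h0 k
        | zero => simp
        | add a b _ _ ha hb => rw [inner_add_left, ha, hb, add_zero]
        | smul c a _ ha => rw [inner_smul_left, ha, mul_zero]
      have : ⟪s, s⟫_ℝ = 0 := horth s (hspan ▸ hs)
      have : s = 0 := by
        simpa using inner_self_eq_zero.mp this
      exact Subtype.ext this
    -- invert T on its range, compose with L, extend to all of ℝⁿ
    obtain ⟨A, hA⟩ := LinearMap.exists_extend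
      (((L : H →ₗ[ℝ] H').comp S.subtype).comp
        (LinearEquiv.ofInjective T hTinj).symm.toLinearMap)
    have hAv : ∀ s : S, A (T s) = L (s : H) := by
      intro s
      have h1 : (LinearEquiv.ofInjective T hTinj).symm
          ((LinearEquiv.ofInjective T hTinj) s) = s := LinearEquiv.symm_apply_apply _ _
      have h2 := congrFun (congrArg DFunLike.coe hA) ((LinearEquiv.ofInjective T hTinj) s)
      simp only [LinearMap.comp_apply, Submodule.subtype_apply, LinearMap.coe_comp,
        Function.comp_apply, LinearEquiv.coe_coe] at h2 ⊢
      rw [h1] at h2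
      exact h2
    have hφS : ∀ i, φ i ∈ S := fun i => Submodule.subset_span ⟨i, rfl⟩
    have hAφ : ∀ i, A (v i) = L (φ i) := by
      intro i
      have : T ⟨φ i, hφS i⟩ = v i := by
        funext k; simp only [hT, LinearMap.coe_mk, AddHom.coe_mk]
        rw [hv i k, real_inner_comm]
      rw [← this, hAv]
    -- the PSD matrix of A
    set M : Matrix (Fin n) (Fin n) ℝ :=
      Matrix.of (fun k l => ⟪A (Pi.single k 1), A (Pi.single l 1)⟫_ℝ) with hM
    have hx : ∀ y : Fin n → ℝ, A y = ∑ k, y k • A (Pi.single k 1) := by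
      intro y
      have hy : y = ∑ k, y k • (Pi.single k 1 : Fin n → ℝ) := by
        funext j
        simp [Finset.sum_apply, Pi.single_apply, Finset.sum_ite_eq']
      conv_lhs => rw [hy]
      simp [map_sum, _root_.map_smul]
    have hMv : ∀ u w : Fin n → ℝ, u ⬝ᵥ M.mulVec w = ⟪A u, A w⟫_ℝ := by
      intro u w
      rw [hx u, hx w, inner_sum]
      simp only [sum_inner, real_inner_smul_left, real_inner_smul_right]
      simp only [dotProduct, Matrix.mulVec, hM, Matrix.of_apply, Finset.mul_sum]
      rw [Finset.sum_comm]
      exact Finset.sum_congr rfl fun _ _ => Finset.sum_congr rfl fun _ _ => by ring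
    have hMps : M.PosSemidef := by
      rw [Matrix.posSemidef_iff_dotProduct_mulVec]
      constructor
      · ext k l
        simp [hM, Matrix.conjTranspose_apply, real_inner_comm]
      · intro x
        have : (dotProduct (star x) (M.mulVec x)) = ⟪A x, A x⟫_ℝ := by
          rw [star_trivial]; exact hMv x x
        rw [this]
        exact real_inner_self_nonneg
    obtain ⟨B, hB⟩ : ∃ B : Matrix (Fin n) (Fin n) ℝ, M = Bᴴ * B := by
      open scoped MatrixOrder in
      obtain ⟨B, hB⟩ := CStarAlgebra.nonneg_iff_eq_star_mul_self.mp hMps.nonneg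
      exact ⟨B, by rw [hB, Matrix.star_eq_conjTranspose]⟩
    refine ⟨B, ?_⟩
    have hBM : Bᵀ * B = M := by
      rw [hB, Matrix.conjTranspose_eq_transpose_of_trivial]
    ext i j
    simp only [Matrix.of_apply]
    rw [hBM, hMv, hAφ, hAφ]
  -- conclude
  apply le_antisymm
  · refine le_ciInf fun L' => ?_
    obtain ⟨L, hL⟩ := key2 L'
    exact ciInf_le_of_le hbdd1 L (by rw [hL])
  · refine le_ciInf fun L => ?_
    obtain ⟨L', hL'⟩ := key1 L
    exact ciInf_le_of_le hbdd2 L' (by rw [hL'])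
end
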